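/- arXiv:2012.03761 — 2 statements merged into one kernel-verified Lean document; each statement's English description precedes it below -/
import Mathlib

section
/- Under the hypotheses of the previous statement (uniform convergence with summable δ_j and summable ε_j, x_k being ε_k-optimal for f_k), for each k ≥ 1 the inequality f(x_k) − v* ≤ 2∑_{j=k}^∞ δ_j + 2∑_{j=k}^∞ ε_j holds, where v* = min_{x∈X} f(x). -/
open Filter Topology

/-!
Telescoping the steps `|f k y - f (k+1) y| ≤ δ (k+1)` up to the limit gives
`|f k - g| ≤ ∑_{j > k} δ j` on `X`. An `ε k`-minimizer of `f k` is therefore a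
`(2 ∑_{j > k} δ j + ε k)`-minimizer of `g`, and both tails are dominated by the tails
starting at `k`, since `δ k ≥ 0` for `k ≥ 1` and `ε ≥ 0`.
-/

lemma abs_sub_le_tsum_of_abs_sub_succ_le {u : ℕ → ℝ} {L : ℝ} {δ : ℕ → ℝ}
    (hu : Tendsto u atTop (𝓝 L)) (hstep : ∀ n, |u n - u (n + 1)| ≤ δ (n + 1))
    (hδ : Summable δ) (k : ℕ) : |u k - L| ≤ ∑' j, δ (k + j + 1) :=
  dist_le_tsum_of_dist_le_of_tendsto (fun n => δ (n + 1)) hstep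
    ((summable_nat_add_iff 1).2 hδ) hu k

lemma sub_le_of_abs_sub_le_of_le_add {α : Type*} {F G : α → ℝ} {a b : α} {D e : ℝ}
    (ha : |F a - G a| ≤ D) (hb : |F b - G b| ≤ D) (hab : F a ≤ F b + e) :
    G a - G b ≤ 2 * D + e := by
  linarith [(abs_le.mp ha).1, (abs_le.mp hb).2]

lemma tsum_nat_add_eq_add_tsum_succ {u : ℕ → ℝ} (hu : Summable u) (k : ℕ) :
    ∑' j, u (k + j) = u k + ∑' j, u (k + j + 1) := by
  have hu_tail : Summable fun j => u (k + j) := by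
    simpa only [add_comm] using (summable_nat_add_iff k).2 hu
  exact hu_tail.tsum_eq_zero_add

theorem stmt1_general {d : ℕ} (X : Set (EuclideanSpace ℝ (Fin d)))
    (f : ℕ → EuclideanSpace ℝ (Fin d) → ℝ) (g : EuclideanSpace ℝ (Fin d) → ℝ)
    (hunif : TendstoUniformlyOn f g atTop X)
    (δ ε : ℕ → ℝ)
    (hδ : ∀ k, ∀ y ∈ X, |f k y - f (k + 1) y| ≤ δ (k + 1))
    (hδs : Summable δ) (hεs : Summable ε)
    (x : ℕ → EuclideanSpace ℝ (Fin d)) (hx : ∀ k, x k ∈ X)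
    (hopt : ∀ k, ∀ y ∈ X, f k (x k) ≤ f k y + ε k)
    (xstar : EuclideanSpace ℝ (Fin d)) (hxs : xstar ∈ X) :
    ∀ k : ℕ, 1 ≤ k →
      g (x k) - g xstar ≤ 2 * (∑' j : ℕ, δ (k + j)) + 2 * (∑' j : ℕ, ε (k + j)) := by
  intro k hk
  have hδ_nonneg : ∀ n, 0 ≤ δ (n + 1) := fun n => (abs_nonneg _).trans (hδ n xstar hxs)
  have hε_nonneg : ∀ n, 0 ≤ ε n := fun n => by linarith [hopt n (x n) (hx n)]
  have hfg : ∀ y ∈ X, |f k y - g y| ≤ ∑' j, δ (k + j + 1) := fun y hy =>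
    abs_sub_le_tsum_of_abs_sub_succ_le (hunif.tendsto_at hy) (fun n => hδ n y hy) hδs k
  have hgap : g (x k) - g xstar ≤ 2 * ∑' j, δ (k + j + 1) + ε k :=
    sub_le_of_abs_sub_le_of_le_add (hfg _ (hx k)) (hfg _ hxs) (hopt k xstar hxs)
  obtain ⟨m, rfl⟩ := Nat.exists_eq_add_of_le' hk
  rw [tsum_nat_add_eq_add_tsum_succ hδs, tsum_nat_add_eq_add_tsum_succ hεs]
  have hε_tail : 0 ≤ ∑' j, ε (m + 1 + j + 1) := tsum_nonneg fun j => hε_nonneg _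
  linarith [hδ_nonneg m, hε_nonneg (m + 1)]

theorem stmt1 {d : ℕ} (X : Set (EuclideanSpace ℝ (Fin d)))
    (hXc : IsCompact X) (hXne : X.Nonempty)
    (f : ℕ → EuclideanSpace ℝ (Fin d) → ℝ) (g : EuclideanSpace ℝ (Fin d) → ℝ)
    (hconv : ∀ k, ConvexOn ℝ X (f k))
    (hunif : TendstoUniformlyOn f g atTop X)
    (δ ε : ℕ → ℝ)
    (hδ : ∀ k, ∀ y ∈ X, |f k y - f (k + 1) y| ≤ δ (k + 1))
    (hδs : Summable δ) (hεs : Summable ε)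
    (x : ℕ → EuclideanSpace ℝ (Fin d)) (hx : ∀ k, x k ∈ X)
    (hopt : ∀ k, ∀ y ∈ X, f k (x k) ≤ f k y + ε k)
    (xstar : EuclideanSpace ℝ (Fin d)) (hxs : xstar ∈ X)
    (hmin : ∀ y ∈ X, g xstar ≤ g y) :
    ∀ k : ℕ, 1 ≤ k →
      g (x k) - g xstar ≤ 2 * (∑' j : ℕ, δ (k + j)) + 2 * (∑' j : ℕ, ε (k + j)) :=
  stmt1_general X f g hunif δ ε hδ hδs hεs x hx hopt xstar hxs
end

section
/- Under the hypotheses of Lemma on approximate minimizers (uniform convergence with summable δ_j, ε_j, and x_k being ε_k-optimal for f_k), if additionally f satisfies the growth condition f(x) − v* ≥ τ·dist(x, S*)^γ for all x ∈ X with constants τ > 0, γ > 0, where S* is the set of minimizers of f on X, then for each k ≥ 1, dist(x_k, S*) ≤ (2τ^{−1}(∑_{j=k}^∞ δ_j + ∑_{j=k}^∞ ε_j))^{1/γ}. -/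
open Filter Topology

/-
If f_k is ε_k-optimal at x_k and f_k is uniformly within D_k := ∑_{j ≥ k} δ_j of the limit f
(the sup-distances δ_j telescope), then x_k is (2 D_k + ε_k)-optimal for f. The growth condition
τ · dist(x, S*)^γ ≤ f(x) − v* turns this optimality gap into the distance bound.
-/

lemma dist_le_tsum_of_dist_succ_le {α : Type*} [PseudoMetricSpace α] {u : ℕ → α} {a : α}
    {δ : ℕ → ℝ} (hu : ∀ n, dist (u n) (u (n + 1)) ≤ δ (n + 1)) (hδ : Summable δ)
    (ha : Tendsto u atTop (𝓝 a)) {k : ℕ} (hk : 0 ≤ δ k) :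
    dist (u k) a ≤ ∑' j, δ (k + j) := by
  have hshift : Summable fun j => δ (j + 1) := (summable_nat_add_iff 1).mpr hδ
  calc dist (u k) a
      ≤ ∑' j, δ (k + j + 1) := dist_le_tsum_of_dist_le_of_tendsto _ hu hshift ha k
    _ ≤ δ (k + 0) + ∑' j, δ (k + (j + 1)) := le_add_of_nonneg_left hk
    _ = ∑' j, δ (k + j) :=
        (((summable_nat_add_iff k).mpr hδ).congr fun j => by rw [add_comm]).tsum_eq_zero_add.symm

lemma le_add_of_abs_sub_le_of_le_add {E : Type*} {X : Set E} {f g : E → ℝ} {D ε : ℝ} {x y : E}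
    (hfg : ∀ z ∈ X, |f z - g z| ≤ D) (hopt : ∀ z ∈ X, f x ≤ f z + ε) (hx : x ∈ X) (hy : y ∈ X) :
    g x ≤ g y + 2 * D + ε := by
  have hx' := (abs_le.mp (hfg x hx)).1
  have hy' := (abs_le.mp (hfg y hy)).2
  linarith [hopt y hy]

lemma le_rpow_one_div_of_mul_rpow_le {t s τ γ : ℝ} (ht : 0 ≤ t) (hτ : 0 < τ) (hγ : 0 < γ)
    (h : τ * t ^ γ ≤ s) : t ≤ (τ⁻¹ * s) ^ (1 / γ) := by
  have hts : t ^ γ ≤ τ⁻¹ * s := by rwa [le_inv_mul_iff₀ hτ]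
  rw [one_div, Real.le_rpow_inv_iff_of_pos ht ((Real.rpow_nonneg ht γ).trans hts) hγ]
  exact hts

theorem stmt2_general {d : ℕ} (X : Set (EuclideanSpace ℝ (Fin d)))
    (f : ℕ → EuclideanSpace ℝ (Fin d) → ℝ) (g : EuclideanSpace ℝ (Fin d) → ℝ)
    (hunif : TendstoUniformlyOn f g atTop X)
    (δ ε : ℕ → ℝ)
    (hδ : ∀ k, ∀ y ∈ X, |f k y - f (k + 1) y| ≤ δ (k + 1))
    (hδs : Summable δ) (hεs : Summable ε)
    (x : ℕ → EuclideanSpace ℝ (Fin d)) (hx : ∀ k, x k ∈ X)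
    (hopt : ∀ k, ∀ y ∈ X, f k (x k) ≤ f k y + ε k)
    (xstar : EuclideanSpace ℝ (Fin d)) (hxs : xstar ∈ X)
    (S : Set (EuclideanSpace ℝ (Fin d)))
    (τ γ : ℝ) (hτ : 0 < τ) (hγ : 0 < γ)
    (hgrowth : ∀ y ∈ X, τ * Metric.infDist y S ^ γ ≤ g y - g xstar) :
    ∀ k : ℕ, 1 ≤ k →
      Metric.infDist (x k) S ≤
        (2 * τ⁻¹ * ((∑' j : ℕ, δ (k + j)) + ∑' j : ℕ, ε (k + j))) ^ (1 / γ) := by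
  intro k hk
  have hε0 : ∀ j, 0 ≤ ε j := fun j => by linarith [hopt j (x j) (hx j)]
  have hδk : 0 ≤ δ k := by
    obtain ⟨m, rfl⟩ := Nat.exists_eq_add_of_le' hk
    exact (abs_nonneg _).trans (hδ m (x 0) (hx 0))
  have hfg : ∀ y ∈ X, |f k y - g y| ≤ ∑' j, δ (k + j) := fun y hy => by
    simpa only [Real.dist_eq] using dist_le_tsum_of_dist_succ_le
      (u := fun n => f n y) (fun n => by simpa only [Real.dist_eq] using hδ n y hy) hδs
      (hunif.tendsto_at hy) hδk
  have hεk : ε k ≤ ∑' j, ε (k + j) :=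
    ((summable_nat_add_iff k).mpr hεs |>.congr fun j => by rw [add_comm]).le_tsum 0
      fun j _ => hε0 _
  have hE0 : 0 ≤ ∑' j, ε (k + j) := tsum_nonneg fun j => hε0 _
  have hgap := le_add_of_abs_sub_le_of_le_add hfg (hopt k) (hx k) hxs
  have hdist := le_rpow_one_div_of_mul_rpow_le Metric.infDist_nonneg hτ hγ
    ((hgrowth (x k) (hx k)).trans (show g (x k) - g xstar ≤
      2 * ((∑' j, δ (k + j)) + ∑' j, ε (k + j)) by linarith))
  rwa [← mul_assoc, mul_comm τ⁻¹] at hdist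

theorem stmt2 {d : ℕ} (X : Set (EuclideanSpace ℝ (Fin d)))
    (hXc : IsCompact X) (hXne : X.Nonempty)
    (f : ℕ → EuclideanSpace ℝ (Fin d) → ℝ) (g : EuclideanSpace ℝ (Fin d) → ℝ)
    (hconv : ∀ k, ConvexOn ℝ X (f k))
    (hunif : TendstoUniformlyOn f g atTop X)
    (δ ε : ℕ → ℝ)
    (hδ : ∀ k, ∀ y ∈ X, |f k y - f (k + 1) y| ≤ δ (k + 1))
    (hδs : Summable δ) (hεs : Summable ε)
    (x : ℕ → EuclideanSpace ℝ (Fin d)) (hx : ∀ k, x k ∈ X)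
    (hopt : ∀ k, ∀ y ∈ X, f k (x k) ≤ f k y + ε k)
    (xstar : EuclideanSpace ℝ (Fin d)) (hxs : xstar ∈ X)
    (hmin : ∀ y ∈ X, g xstar ≤ g y)
    (S : Set (EuclideanSpace ℝ (Fin d))) (hS : S = {y ∈ X | g y = g xstar})
    (τ γ : ℝ) (hτ : 0 < τ) (hγ : 0 < γ)
    (hgrowth : ∀ y ∈ X, τ * Metric.infDist y S ^ γ ≤ g y - g xstar) :
    ∀ k : ℕ, 1 ≤ k →
      Metric.infDist (x k) S ≤
        (2 * τ⁻¹ * ((∑' j : ℕ, δ (k + j)) + ∑' j : ℕ, ε (k + j))) ^ (1 / γ) :=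
  stmt2_general X f g hunif δ ε hδ hδs hεs x hx hopt xstar hxs S τ γ hτ hγ hgrowth
end
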